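/- Fix t₀ ∈ ℝ and suppose inf_{t ≥ t₀} {a₁⁻(t) − κ(a₂⁻(t))₋} > (χ)₊. Then for any initial data 0 ≤ u̲₀ ≤ ū₀, the solution (ū(t), u̲(t)) of the comparison ODE system with (ū(t₀), u̲(t₀)) = (ū₀, u̲₀) exists for all t ≥ t₀ and satisfies 0 ≤ u̲(t) ≤ ū(t) for all t ≥ t₀; moreover 0 ≤ ū(t) ≤ max{ ū₀, (sup_{t∈ℝ} a₀⁺(t)) / (inf_{t ≥ t₀} {a₁⁻(t) − κ(a₂⁻(t))₋ − (χ)₊}) } for all t ≥ t₀. -/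

import Mathlib

/-- `f : ℝ → ℝ` is continuous and bounded. -/
def ContBdd (f : ℝ → ℝ) : Prop :=
  Continuous f ∧ BddAbove (Set.range f) ∧ BddBelow (Set.range f)

/-- `(ub, lb)` solves the comparison ODE system
`ū' = (χ)₊ ū(ū − u̲) + ū[a₀⁺(t) − a₁⁻(t)ū − κ(a₂⁻(t))₊ u̲ + κ(a₂⁻(t))₋ ū]`,
`u̲' = (χ)₊ u̲(u̲ − ū) + u̲[a₀⁻(t) − a₁⁺(t)u̲ − κ(a₂⁺(t))₊ ū + κ(a₂⁺(t))₋ u̲]`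
on the interval `[t₀, ∞)`. -/
def CompODESystemOn (χ κ : ℝ) (a₀m a₀p a₁m a₁p a₂m a₂p : ℝ → ℝ)
    (t₀ : ℝ) (ub lb : ℝ → ℝ) : Prop :=
  ∀ t ∈ Set.Ici t₀,
    HasDerivWithinAt ub
      (max χ 0 * ub t * (ub t - lb t) +
        ub t * (a₀p t - a₁m t * ub t - κ * max (a₂m t) 0 * lb t
          + κ * max (-(a₂m t)) 0 * ub t)) (Set.Ici t₀) t ∧
    HasDerivWithinAt lb
      (max χ 0 * lb t * (lb t - ub t) +
        lb t * (a₀m t - a₁p t * lb t - κ * max (a₂p t) 0 * ub t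
          + κ * max (-(a₂p t)) 0 * lb t)) (Set.Ici t₀) t

/-!
Write the comparison system in Lotka–Volterra form `ū' = ū (α₁ ū + β₁ u̲ + a₀⁺)`,
`u̲' = u̲ (α₂ u̲ + β₂ ū + a₀⁻)` with `α₁ = (χ)₊ − a₁⁻ + κ (a₂⁻)₋`, `β₁ = −(χ)₊ − κ (a₂⁻)₊` and
`α₂`, `β₂` likewise from `a₁⁺`, `a₂⁺`. The region `0 ≤ u̲ ≤ ū ≤ M`, with `M` the bound of the
statement, is forward invariant:
* `u̲'` is `u̲` times a continuous function, so `u̲` cannot become negative;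
* while `u̲ ≥ 0`, `(ū − u̲)' ≥ (ū − u̲) · g(t)` with `g` continuous, because `a₀⁻ ≤ a₀⁺` and
  `α₂ + β₂ = −(a₁⁺ + κ a₂⁺) ≤ −(a₁⁻ + κ a₂⁻) = α₁ + β₁`;
* with `J = inf_{t ≥ t₀} (a₁⁻ − κ (a₂⁻)₋ − (χ)₊) > 0` we have `α₁ ≤ −J`, so when `ū ≥ M` the
  growth rate of `ū` is at most `α₁ M + a₀⁺ ≤ −J M + sup a₀⁺ ≤ 0`.
Each item is a barrier argument against `ε e^{λ t}`. For existence, clamp the state to `[0, M]`: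
the clamped field is bounded and globally Lipschitz, so Picard–Lindelöf solutions on
`[t₀, t₀ + n]` glue to a global solution, which by the same invariance never feels the clamp.
-/

open Set Topology
open scoped NNReal

theorem nonneg_of_hasDerivWithinAt_of_abs_mul_le {f f' g : ℝ → ℝ} {a : ℝ}
    (hf : ∀ t ∈ Ici a, HasDerivWithinAt f (f' t) (Ici a) t) (hg : ContinuousOn g (Ici a))
    (ha : 0 ≤ f a) (hle : ∀ t ∈ Ici a, f t < 0 → |g t| * f t ≤ f' t) :
    ∀ t ∈ Ici a, 0 ≤ f t := by
  intro b hb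
  obtain ⟨K, hK⟩ := isCompact_Icc.exists_bound_of_continuousOn
    (hg.mono (Icc_subset_Ici_self : Icc a b ⊆ Ici a))
  set c := |K| + 1
  have hbarrier : ∀ ε > 0, -f b ≤ ε * Real.exp (c * (b - a)) := by
    intro ε hε
    have hB : ∀ t, HasDerivAt (fun t => ε * Real.exp (c * (t - a)))
        (ε * (Real.exp (c * (t - a)) * (c * 1))) t := fun t =>
      ((((hasDerivAt_id t).sub_const a).const_mul c).exp).const_mul ε
    refine image_le_of_deriv_right_lt_deriv_boundary (f := fun t => -f t) (f' := fun t => -f' t)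
      (fun t ht => ((hf t ht.1).continuousWithinAt.mono Icc_subset_Ici_self).neg)
      (fun t ht => ((hf t ht.1).mono (Ici_subset_Ici.2 ht.1)).neg)
      (by rw [sub_self, mul_zero, Real.exp_zero, mul_one]; linarith) hB
      (fun t ht hft => ?_) ⟨hb, le_rfl⟩
    have hpos : 0 < -f t := hft ▸ by positivity
    have hgK : |g t| ≤ |K| := (hK t (Ico_subset_Icc_self ht)).trans (le_abs_self K)
    calc -f' t ≤ |g t| * -f t := by linarith [hle t ht.1 (neg_pos.1 hpos)]
      _ ≤ |K| * -f t := mul_le_mul_of_nonneg_right hgK hpos.le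
      _ < c * -f t := mul_lt_mul_of_pos_right (lt_add_one _) hpos
      _ = ε * (Real.exp (c * (t - a)) * (c * 1)) := by rw [hft]; ring
  have hE := Real.exp_pos (c * (b - a))
  refine neg_nonpos.1 (le_of_forall_pos_le_add fun ε hε => ?_)
  simpa [div_mul_cancel₀ _ hE.ne'] using hbarrier (ε / Real.exp (c * (b - a))) (by positivity)

section GlobalExistence

variable {E : Type*} [NormedAddCommGroup E] [NormedSpace ℝ E] [CompleteSpace E]
  {F : ℝ → E → E} {C L : ℝ≥0}

theorem exists_hasDerivWithinAt_Icc_of_lipschitzWith (hC : ∀ t x, ‖F t x‖ ≤ C)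
    (hL : ∀ t, LipschitzWith L (F t)) (hF : ∀ x, Continuous (F · x)) (x₀ : E) {a b : ℝ}
    (hab : a ≤ b) :
    ∃ α : ℝ → E, α a = x₀ ∧ ∀ t ∈ Icc a b, HasDerivWithinAt α (F t (α t)) (Icc a b) t :=
  IsPicardLindelof.exists_eq_forall_mem_Icc_hasDerivWithinAt₀ (t₀ := ⟨a, le_rfl, hab⟩)
    (a := C * (b - a).toNNReal) (L := C) (K := L)
    { lipschitzOnWith := fun t _ => (hL t).lipschitzOnWith
      continuousOn := fun x _ => (hF x).continuousOn
      norm_le := fun t _ x _ => hC t x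
      mul_max_le := by simp [hab] }

theorem exists_hasDerivWithinAt_Ici_of_lipschitzWith (hC : ∀ t x, ‖F t x‖ ≤ C)
    (hL : ∀ t, LipschitzWith L (F t)) (hF : ∀ x, Continuous (F · x)) (a : ℝ) (x₀ : E) :
    ∃ α : ℝ → E, α a = x₀ ∧ ∀ t ∈ Ici a, HasDerivWithinAt α (F t (α t)) (Ici a) t := by
  choose α hα₀ hα using fun n : ℕ =>
    exists_hasDerivWithinAt_Icc_of_lipschitzWith hC hL hF x₀ (le_add_of_nonneg_right n.cast_nonneg)
  have hnhds : ∀ (n : ℕ) t, t < a + n → Ico a (a + n) ∈ 𝓝[Ici a] t := fun n t ht =>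
    mem_nhdsWithin.2 ⟨Iio (a + n), isOpen_Iio, ht, fun s hs => ⟨hs.2, hs.1⟩⟩
  have hα' : ∀ n : ℕ, ∀ t ∈ Ico a (a + n), HasDerivWithinAt (α n) (F t (α n t)) (Ici t) t :=
    fun n t ht => (hα n t (Ico_subset_Icc_self ht)).mono_of_mem_nhdsWithin <|
      mem_nhdsWithin.2 ⟨Iio (a + n), isOpen_Iio, ht.2, fun s hs => ⟨ht.1.trans hs.2, hs.1.le⟩⟩
  have hmono : ∀ m n : ℕ, m ≤ n → EqOn (α m) (α n) (Icc a (a + m)) := by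
    intro m n hmn
    have hmn' : a + (m : ℝ) ≤ a + n := by gcongr
    exact ODE_solution_unique_of_mem_Icc_right (s := fun _ => univ)
      (fun t _ => (hL t).lipschitzOnWith) (fun t ht => (hα m t ht).continuousWithinAt)
      (hα' m) (fun _ _ => trivial)
      (fun t ht => ((hα n t ⟨ht.1, ht.2.trans hmn'⟩).continuousWithinAt).mono
        (Icc_subset_Icc_right hmn'))
      (fun t ht => hα' n t ⟨ht.1, ht.2.trans_le hmn'⟩) (fun _ _ => trivial) (by rw [hα₀, hα₀])
  have hagree : ∀ m n : ℕ, ∀ s ∈ Icc a (a + m), s ∈ Icc a (a + n) → α m s = α n s := by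
    intro m n s hm hn
    rcases le_total m n with h | h
    exacts [hmono m n h hm, (hmono n m h hn).symm]
  set N : ℝ → ℕ := fun t => ⌈t - a⌉₊ + 1
  have hN : ∀ t, t < a + N t := fun t => by simp only [N]; push_cast; linarith [Nat.le_ceil (t - a)]
  refine ⟨fun t => α (N t) t, hα₀ _, fun t ht => ?_⟩
  refine ((hα _ t ⟨ht, (hN t).le⟩).mono_of_mem_nhdsWithin
    (Filter.mem_of_superset (hnhds _ t (hN t)) Ico_subset_Icc_self)).congr_of_eventuallyEq
    (Filter.mem_of_superset (hnhds _ t (hN t)) fun s hs =>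
      hagree _ _ s ⟨hs.1, (hN s).le⟩ (Ico_subset_Icc_self hs)) rfl

end GlobalExistence

section ContBdd

variable {f g : ℝ → ℝ}

theorem contBdd_iff : ContBdd f ↔ Continuous f ∧ ∃ A, ∀ t, |f t| ≤ A := by
  refine ⟨fun ⟨hc, ⟨b, hb⟩, ⟨c, hc'⟩⟩ => ⟨hc, max b (-c), fun t => abs_le.2 ⟨?_, ?_⟩⟩,
    fun ⟨hc, A, hA⟩ => ⟨hc, ⟨A, ?_⟩, ⟨-A, ?_⟩⟩⟩
  · linarith [le_max_right b (-c), hc' ⟨t, rfl⟩]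
  · exact (hb ⟨t, rfl⟩).trans (le_max_left _ _)
  · rintro _ ⟨t, rfl⟩; exact (abs_le.1 (hA t)).2
  · rintro _ ⟨t, rfl⟩; exact (abs_le.1 (hA t)).1

theorem ContBdd.exists_abs_le (hf : ContBdd f) : ∃ A, ∀ t, |f t| ≤ A := (contBdd_iff.1 hf).2

theorem ContBdd.const (c : ℝ) : ContBdd fun _ => c :=
  contBdd_iff.2 ⟨continuous_const, |c|, fun _ => le_rfl⟩

theorem ContBdd.neg (hf : ContBdd f) : ContBdd fun t => -f t := by
  obtain ⟨hc, A, hA⟩ := contBdd_iff.1 hf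
  exact contBdd_iff.2 ⟨hc.neg, A, fun t => (abs_neg (f t)).trans_le (hA t)⟩

theorem ContBdd.add (hf : ContBdd f) (hg : ContBdd g) : ContBdd fun t => f t + g t := by
  obtain ⟨hfc, A, hA⟩ := contBdd_iff.1 hf
  obtain ⟨hgc, B, hB⟩ := contBdd_iff.1 hg
  exact contBdd_iff.2
    ⟨hfc.add hgc, A + B, fun t => (abs_add_le _ _).trans (add_le_add (hA t) (hB t))⟩

theorem ContBdd.sub (hf : ContBdd f) (hg : ContBdd g) : ContBdd fun t => f t - g t := by
  simpa only [sub_eq_add_neg] using hf.add hg.neg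

theorem ContBdd.mul (hf : ContBdd f) (hg : ContBdd g) : ContBdd fun t => f t * g t := by
  obtain ⟨hfc, A, hA⟩ := contBdd_iff.1 hf
  obtain ⟨hgc, B, hB⟩ := contBdd_iff.1 hg
  refine contBdd_iff.2 ⟨hfc.mul hgc, A * B, fun t => ?_⟩
  rw [abs_mul]
  exact mul_le_mul (hA t) (hB t) (abs_nonneg _) ((abs_nonneg _).trans (hA t))

theorem ContBdd.max (hf : ContBdd f) (hg : ContBdd g) : ContBdd fun t => max (f t) (g t) := by
  obtain ⟨hfc, A, hA⟩ := contBdd_iff.1 hf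
  obtain ⟨hgc, B, hB⟩ := contBdd_iff.1 hg
  exact contBdd_iff.2 ⟨hfc.max hgc, Max.max A B,
    fun t => abs_max_le_max_abs_abs.trans (max_le_max (hA t) (hB t))⟩

theorem ContBdd.bddBelow_range_restrict (hf : ContBdd f) (s : Set ℝ) :
    BddBelow (range fun t : s => f t) :=
  hf.2.2.mono (range_comp_subset_range _ _)

end ContBdd

theorem abs_mul_le_mul_of_le_of_nonpos {f p : ℝ} (g : ℝ) (hfp : f ≤ p) (hp : p ≤ 0) :
    |g| * f ≤ p * g :=
  calc |g| * f ≤ |g| * p := mul_le_mul_of_nonneg_left hfp (abs_nonneg g)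
    _ = p * |g| := mul_comm _ _
    _ ≤ p * g := mul_le_mul_of_nonpos_left (le_abs_self g) hp

theorem Monotone.sub_le_map_sub_map_of_lipschitzWith_one {π : ℝ → ℝ} (hπ : Monotone π)
    (hπ1 : LipschitzWith 1 π) {r s : ℝ} (hrs : r ≤ s) : r - s ≤ π r - π s ∧ π r - π s ≤ 0 := by
  have := hπ1.dist_le_mul s r
  rw [NNReal.coe_one, one_mul, Real.dist_eq, Real.dist_eq, abs_of_nonneg (sub_nonneg.2 hrs)] at this
  exact ⟨by linarith [le_abs_self (π s - π r)], sub_nonpos.2 (hπ hrs)⟩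

namespace LotkaVolterra

def rhs (α β γ : ℝ → ℝ) (t u v : ℝ) : ℝ := u * (α t * u + β t * v + γ t)

variable {α β γ α₁ β₁ γ₁ α₂ β₂ γ₂ : ℝ → ℝ}

theorem sub_mul_le_rhs_sub_rhs {t u v : ℝ} (hv : 0 ≤ v) (hγ : γ₂ t ≤ γ₁ t)
    (hαβ : α₂ t + β₂ t ≤ α₁ t + β₁ t) :
    (u - v) * (α₁ t * (u + v) + (β₁ t - β₂ t) * v + γ₁ t) ≤
      rhs α₁ β₁ γ₁ t u v - rhs α₂ β₂ γ₂ t v u := by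
  have key : rhs α₁ β₁ γ₁ t u v - rhs α₂ β₂ γ₂ t v u -
      (u - v) * (α₁ t * (u + v) + (β₁ t - β₂ t) * v + γ₁ t) =
      v ^ 2 * ((α₁ t + β₁ t) - (α₂ t + β₂ t)) + v * (γ₁ t - γ₂ t) := by
    simp only [rhs]; ring
  have : 0 ≤ v ^ 2 * ((α₁ t + β₁ t) - (α₂ t + β₂ t)) + v * (γ₁ t - γ₂ t) :=
    add_nonneg (mul_nonneg (sq_nonneg v) (sub_nonneg.2 hαβ)) (mul_nonneg hv (sub_nonneg.2 hγ))
  linarith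

theorem rhs_nonpos {t M u v : ℝ} (hM : 0 ≤ M) (hu : M ≤ u) (hv : 0 ≤ v) (hα : α t ≤ 0)
    (hβ : β t ≤ 0) (hγ : α t * M + γ t ≤ 0) : rhs α β γ t u v ≤ 0 := by
  have : α t * u ≤ α t * M := mul_le_mul_of_nonpos_left hu hα
  have : β t * v ≤ 0 := mul_nonpos_of_nonpos_of_nonneg hβ hv
  exact mul_nonpos_of_nonneg_of_nonpos (hM.trans hu) (by linarith)

theorem abs_rhs_sub_rhs_le {t A M u v u' v' : ℝ} (hα : |α t| ≤ A) (hβ : |β t| ≤ A)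
    (hγ : |γ t| ≤ A) (hu : |u| ≤ M) (hv : |v| ≤ M) (hu' : |u'| ≤ M) :
    |rhs α β γ t u v - rhs α β γ t u' v'| ≤ A * (4 * M + 1) * max |u - u'| |v - v'| := by
  set d := max |u - u'| |v - v'|
  have hd₁ : |u - u'| ≤ d := le_max_left _ _
  have hd₂ : |v - v'| ≤ d := le_max_right _ _
  have hA : 0 ≤ A := (abs_nonneg _).trans hγ
  have hM : 0 ≤ M := (abs_nonneg u).trans hu
  have h₁ : |α t * u + β t * v + γ t| ≤ A * (2 * M + 1) :=
    calc |α t * u + β t * v + γ t| ≤ |α t| * |u| + |β t| * |v| + |γ t| := by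
          rw [← abs_mul, ← abs_mul]; exact abs_add_three _ _ _
      _ ≤ A * M + A * M + A := by gcongr
      _ = A * (2 * M + 1) := by ring
  have h₂ : |α t * (u - u') + β t * (v - v')| ≤ A * (2 * d) :=
    calc |α t * (u - u') + β t * (v - v')| ≤ |α t| * |u - u'| + |β t| * |v - v'| := by
          rw [← abs_mul, ← abs_mul]; exact abs_add_le _ _
      _ ≤ A * d + A * d := by gcongr
      _ = A * (2 * d) := by ring
  calc |rhs α β γ t u v - rhs α β γ t u' v'|
      = |(u - u') * (α t * u + β t * v + γ t) + u' * (α t * (u - u') + β t * (v - v'))| := by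
        simp only [rhs]; ring_nf
    _ ≤ |u - u'| * |α t * u + β t * v + γ t| + |u'| * |α t * (u - u') + β t * (v - v')| := by
        rw [← abs_mul, ← abs_mul]; exact abs_add_le _ _
    _ ≤ d * (A * (2 * M + 1)) + M * (A * (2 * d)) := by gcongr
    _ = A * (4 * M + 1) * d := by ring

theorem exists_abs_rhs_sub_rhs_le (hα : ContBdd α) (hβ : ContBdd β) (hγ : ContBdd γ) (M : ℝ) :
    ∃ L : ℝ≥0, ∀ t u v u' v', |u| ≤ M → |v| ≤ M → |u'| ≤ M →
      |rhs α β γ t u v - rhs α β γ t u' v'| ≤ L * max |u - u'| |v - v'| := by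
  obtain ⟨A₁, hA₁⟩ := hα.exists_abs_le
  obtain ⟨A₂, hA₂⟩ := hβ.exists_abs_le
  obtain ⟨A₃, hA₃⟩ := hγ.exists_abs_le
  set A := max (max A₁ A₂) A₃
  refine ⟨(A * (4 * M + 1)).toNNReal, fun t u v u' v' hu hv hu' => ?_⟩
  exact (abs_rhs_sub_rhs_le ((hA₁ t).trans (by simp [A])) ((hA₂ t).trans (by simp [A]))
    ((hA₃ t).trans (by simp [A])) hu hv hu').trans
    (mul_le_mul_of_nonneg_right (Real.le_coe_toNNReal _) (by positivity))

section Invariance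

variable {π x y : ℝ → ℝ} {t₀ M : ℝ}

theorem snd_nonneg (hπ : Monotone π) (hπ1 : LipschitzWith 1 π) (hπ0 : π 0 = 0)
    (hα₂ : ContinuousOn α₂ (Ici t₀)) (hβ₂ : ContinuousOn β₂ (Ici t₀))
    (hγ₂ : ContinuousOn γ₂ (Ici t₀)) (hxc : ContinuousOn x (Ici t₀))
    (hy : ∀ t ∈ Ici t₀, HasDerivWithinAt y (rhs α₂ β₂ γ₂ t (π (y t)) (π (x t))) (Ici t₀) t)
    (hy₀ : 0 ≤ y t₀) : ∀ t ∈ Ici t₀, 0 ≤ y t := by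
  have hyc : ContinuousOn y (Ici t₀) := fun t ht => (hy t ht).continuousWithinAt
  have hπc := hπ1.continuous
  refine nonneg_of_hasDerivWithinAt_of_abs_mul_le hy
    (g := fun t => α₂ t * π (y t) + β₂ t * π (x t) + γ₂ t) (by fun_prop) hy₀ fun t _ hyt => ?_
  have := hπ.sub_le_map_sub_map_of_lipschitzWith_one hπ1 hyt.le
  rw [hπ0, sub_zero, sub_zero] at this
  exact abs_mul_le_mul_of_le_of_nonpos _ this.1 this.2

theorem snd_le_fst (hπ : Monotone π) (hπ1 : LipschitzWith 1 π) (hπ0 : π 0 = 0)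
    (hα₁ : ContinuousOn α₁ (Ici t₀)) (hβ₁ : ContinuousOn β₁ (Ici t₀))
    (hγ₁ : ContinuousOn γ₁ (Ici t₀)) (hβ₂ : ContinuousOn β₂ (Ici t₀))
    (hγ : ∀ t ∈ Ici t₀, γ₂ t ≤ γ₁ t) (hαβ : ∀ t ∈ Ici t₀, α₂ t + β₂ t ≤ α₁ t + β₁ t)
    (hx : ∀ t ∈ Ici t₀, HasDerivWithinAt x (rhs α₁ β₁ γ₁ t (π (x t)) (π (y t))) (Ici t₀) t)
    (hy : ∀ t ∈ Ici t₀, HasDerivWithinAt y (rhs α₂ β₂ γ₂ t (π (y t)) (π (x t))) (Ici t₀) t)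
    (hy₀ : ∀ t ∈ Ici t₀, 0 ≤ y t) (hxy₀ : y t₀ ≤ x t₀) : ∀ t ∈ Ici t₀, y t ≤ x t := by
  have hxc : ContinuousOn x (Ici t₀) := fun t ht => (hx t ht).continuousWithinAt
  have hyc : ContinuousOn y (Ici t₀) := fun t ht => (hy t ht).continuousWithinAt
  have hπc := hπ1.continuous
  have := nonneg_of_hasDerivWithinAt_of_abs_mul_le (fun t ht => (hx t ht).sub (hy t ht))
    (g := fun t => α₁ t * (π (x t) + π (y t)) + (β₁ t - β₂ t) * π (y t) + γ₁ t) (by fun_prop)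
    (sub_nonneg.2 hxy₀) fun t ht hxyt => ?_
  · exact fun t ht => sub_nonneg.1 (this t ht)
  have hπxy := hπ.sub_le_map_sub_map_of_lipschitzWith_one hπ1 (sub_neg.1 hxyt).le
  have hπy : 0 ≤ π (y t) := hπ0 ▸ hπ (hy₀ t ht)
  exact (abs_mul_le_mul_of_le_of_nonpos _ hπxy.1 hπxy.2).trans
    (sub_mul_le_rhs_sub_rhs hπy (hγ t ht) (hαβ t ht))

theorem fst_le (hπ : Monotone π) (hπ0 : π 0 = 0) (hπM : ∀ r, M ≤ r → M ≤ π r)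
    (hα₁ : ∀ t ∈ Ici t₀, α₁ t ≤ 0) (hβ₁ : ∀ t ∈ Ici t₀, β₁ t ≤ 0)
    (hM : ∀ t ∈ Ici t₀, α₁ t * M + γ₁ t ≤ 0) (hM0 : 0 ≤ M)
    (hx : ∀ t ∈ Ici t₀, HasDerivWithinAt x (rhs α₁ β₁ γ₁ t (π (x t)) (π (y t))) (Ici t₀) t)
    (hy₀ : ∀ t ∈ Ici t₀, 0 ≤ y t) (hxM : x t₀ ≤ M) : ∀ t ∈ Ici t₀, x t ≤ M := by
  have := nonneg_of_hasDerivWithinAt_of_abs_mul_le (fun t ht => (hx t ht).const_sub M)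
    (g := fun _ => 0) continuousOn_const (sub_nonneg.2 hxM) fun t ht hxt => ?_
  · exact fun t ht => sub_nonneg.1 (this t ht)
  rw [abs_zero, zero_mul, neg_nonneg]
  exact rhs_nonpos hM0 (hπM _ (sub_neg.1 hxt).le) (hπ0 ▸ hπ (hy₀ t ht)) (hα₁ t ht) (hβ₁ t ht)
    (hM t ht)

theorem zero_le_snd_le_fst_le (hπ : Monotone π) (hπ1 : LipschitzWith 1 π) (hπ0 : π 0 = 0)
    (hπM : ∀ r, M ≤ r → M ≤ π r)
    (hα₁ : ContinuousOn α₁ (Ici t₀)) (hβ₁ : ContinuousOn β₁ (Ici t₀))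
    (hγ₁ : ContinuousOn γ₁ (Ici t₀)) (hα₂ : ContinuousOn α₂ (Ici t₀))
    (hβ₂ : ContinuousOn β₂ (Ici t₀)) (hγ₂ : ContinuousOn γ₂ (Ici t₀))
    (hγ : ∀ t ∈ Ici t₀, γ₂ t ≤ γ₁ t) (hαβ : ∀ t ∈ Ici t₀, α₂ t + β₂ t ≤ α₁ t + β₁ t)
    (hα₁0 : ∀ t ∈ Ici t₀, α₁ t ≤ 0) (hβ₁0 : ∀ t ∈ Ici t₀, β₁ t ≤ 0)
    (hM : ∀ t ∈ Ici t₀, α₁ t * M + γ₁ t ≤ 0)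
    (hx : ∀ t ∈ Ici t₀, HasDerivWithinAt x (rhs α₁ β₁ γ₁ t (π (x t)) (π (y t))) (Ici t₀) t)
    (hy : ∀ t ∈ Ici t₀, HasDerivWithinAt y (rhs α₂ β₂ γ₂ t (π (y t)) (π (x t))) (Ici t₀) t)
    (hy₀ : 0 ≤ y t₀) (hxy₀ : y t₀ ≤ x t₀) (hxM : x t₀ ≤ M) :
    ∀ t ∈ Ici t₀, 0 ≤ y t ∧ y t ≤ x t ∧ x t ≤ M := by
  have hy0 : ∀ t ∈ Ici t₀, 0 ≤ y t :=
    snd_nonneg hπ hπ1 hπ0 hα₂ hβ₂ hγ₂ (fun t ht => (hx t ht).continuousWithinAt) hy hy₀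
  have hxy := snd_le_fst hπ hπ1 hπ0 hα₁ hβ₁ hγ₁ hβ₂ hγ hαβ hx hy hy0 hxy₀
  have hxM := fst_le hπ hπ0 hπM hα₁0 hβ₁0 hM (hy₀.trans (hxy₀.trans hxM)) hx hy0 hxM
  exact fun t ht => ⟨hy0 t ht, hxy t ht, hxM t ht⟩

end Invariance

theorem exists_solution {t₀ M x₀ y₀ : ℝ}
    (hα₁ : ContBdd α₁) (hβ₁ : ContBdd β₁) (hγ₁ : ContBdd γ₁)
    (hα₂ : ContBdd α₂) (hβ₂ : ContBdd β₂) (hγ₂ : ContBdd γ₂)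
    (hγ : ∀ t ∈ Ici t₀, γ₂ t ≤ γ₁ t) (hαβ : ∀ t ∈ Ici t₀, α₂ t + β₂ t ≤ α₁ t + β₁ t)
    (hα₁0 : ∀ t ∈ Ici t₀, α₁ t ≤ 0) (hβ₁0 : ∀ t ∈ Ici t₀, β₁ t ≤ 0)
    (hM : ∀ t ∈ Ici t₀, α₁ t * M + γ₁ t ≤ 0)
    (hy₀ : 0 ≤ y₀) (hxy₀ : y₀ ≤ x₀) (hxM : x₀ ≤ M) :
    ∃ x y : ℝ → ℝ, x t₀ = x₀ ∧ y t₀ = y₀ ∧ ∀ t ∈ Ici t₀,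
      HasDerivWithinAt x (rhs α₁ β₁ γ₁ t (x t) (y t)) (Ici t₀) t ∧
      HasDerivWithinAt y (rhs α₂ β₂ γ₂ t (y t) (x t)) (Ici t₀) t := by
  have hM0 : 0 ≤ M := hy₀.trans (hxy₀.trans hxM)
  set π : ℝ → ℝ := fun r => projIcc 0 M hM0 r
  have hπM : ∀ r, |π r| ≤ M := fun r =>
    abs_le.2 ⟨by linarith [(projIcc 0 M hM0 r).2.1], (projIcc 0 M hM0 r).2.2⟩
  have hπ1 : LipschitzWith 1 π := by
    have := (LipschitzWith.subtype_val _).comp (LipschitzWith.projIcc hM0)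
    rwa [mul_one] at this
  have hπd : ∀ a b, |π a - π b| ≤ |a - b| := fun a b => by
    simpa [Real.dist_eq] using hπ1.dist_le_mul a b
  set F : ℝ → ℝ × ℝ → ℝ × ℝ := fun t p =>
    (rhs α₁ β₁ γ₁ t (π p.1) (π p.2), rhs α₂ β₂ γ₂ t (π p.2) (π p.1))
  obtain ⟨L₁, hL₁⟩ := exists_abs_rhs_sub_rhs_le hα₁ hβ₁ hγ₁ M
  obtain ⟨L₂, hL₂⟩ := exists_abs_rhs_sub_rhs_le hα₂ hβ₂ hγ₂ M
  have hFL : ∀ t, LipschitzWith (max L₁ L₂) (F t) := fun t => by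
    refine LipschitzWith.of_dist_le_mul fun p q => ?_
    have hd : max |π p.1 - π q.1| |π p.2 - π q.2| ≤ dist p q := by
      rw [Prod.dist_eq, Real.dist_eq, Real.dist_eq]; exact max_le_max (hπd _ _) (hπd _ _)
    rw [Prod.dist_eq, Real.dist_eq, Real.dist_eq]
    refine max_le ((hL₁ t _ _ _ _ (hπM _) (hπM _) (hπM _)).trans ?_)
      ((hL₂ t _ _ _ _ (hπM _) (hπM _) (hπM _)).trans ?_)
    · exact mul_le_mul (by simp) hd (by positivity) (by positivity)
    · rw [max_comm]; exact mul_le_mul (by simp) hd (by positivity) (by positivity)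
  have hFC : ∀ t p, ‖F t p‖ ≤ ((max L₁ L₂ * M.toNNReal : ℝ≥0) : ℝ) := fun t p => by
    have h0 : |(0 : ℝ)| ≤ M := by simpa using hM0
    have e₁ := hL₁ t (π p.1) (π p.2) 0 0 (hπM _) (hπM _) h0
    have e₂ := hL₂ t (π p.2) (π p.1) 0 0 (hπM _) (hπM _) h0
    simp only [rhs, zero_mul, sub_zero] at e₁ e₂
    rw [Prod.norm_def, Real.norm_eq_abs, Real.norm_eq_abs, NNReal.coe_mul,
      Real.coe_toNNReal _ hM0]
    refine max_le (e₁.trans ?_) (e₂.trans ?_) <;>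
      exact mul_le_mul (by simp) (max_le (hπM _) (hπM _)) (by positivity) (by positivity)
  have hFt : ∀ p, Continuous (F · p) := fun p => by
    have := hα₁.1; have := hβ₁.1; have := hγ₁.1; have := hα₂.1; have := hβ₂.1; have := hγ₂.1
    simp only [F, rhs]; fun_prop
  obtain ⟨z, hz₀, hz⟩ := exists_hasDerivWithinAt_Ici_of_lipschitzWith hFC hFL hFt t₀ (x₀, y₀)
  have hx : ∀ t ∈ Ici t₀, HasDerivWithinAt (fun t => (z t).1) (F t (z t)).1 (Ici t₀) t :=
    fun t ht => (hasFDerivAt_fst (𝕜 := ℝ) (p := z t)).comp_hasDerivWithinAt t (hz t ht)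
  have hy : ∀ t ∈ Ici t₀, HasDerivWithinAt (fun t => (z t).2) (F t (z t)).2 (Ici t₀) t :=
    fun t ht => (hasFDerivAt_snd (𝕜 := ℝ) (p := z t)).comp_hasDerivWithinAt t (hz t ht)
  have hbox := zero_le_snd_le_fst_le (x := fun t => (z t).1) (y := fun t => (z t).2)
    (fun a b h => Subtype.mono_coe _ (monotone_projIcc hM0 h)) hπ1 (by simp)
    (fun r hr => by simp [projIcc_of_right_le hM0 hr]) hα₁.1.continuousOn hβ₁.1.continuousOn
    hγ₁.1.continuousOn hα₂.1.continuousOn hβ₂.1.continuousOn hγ₂.1.continuousOn hγ hαβ hα₁0 hβ₁0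
    hM hx hy (by simp [hz₀, hy₀]) (by simp [hz₀, hxy₀]) (by simp [hz₀, hxM])
  have hπz : ∀ t ∈ Ici t₀, π (z t).1 = (z t).1 ∧ π (z t).2 = (z t).2 := fun t ht => by
    obtain ⟨h₀, h₁, h₂⟩ := hbox t ht
    exact ⟨by simp [π, projIcc_of_mem hM0 ⟨h₀.trans h₁, h₂⟩],
      by simp [π, projIcc_of_mem hM0 ⟨h₀, h₁.trans h₂⟩]⟩
  refine ⟨fun t => (z t).1, fun t => (z t).2, by simp [hz₀], by simp [hz₀], fun t ht => ?_⟩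
  have h := hπz t ht
  exact ⟨by simpa [F, h.1, h.2] using hx t ht, by simpa [F, h.1, h.2] using hy t ht⟩

end LotkaVolterra

def compSelfCoeff (χ κ : ℝ) (a₁ a₂ : ℝ → ℝ) (t : ℝ) : ℝ := max χ 0 - a₁ t + κ * max (-(a₂ t)) 0

def compCrossCoeff (χ κ : ℝ) (a₂ : ℝ → ℝ) (t : ℝ) : ℝ := -(max χ 0 + κ * max (a₂ t) 0)

section CompSystem

variable {χ κ : ℝ} {a₀m a₀p a₁m a₁p a₂m a₂p a₁ a₂ a₁' a₂' : ℝ → ℝ} {t₀ t : ℝ}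

theorem compODESystemOn_iff {ub lb : ℝ → ℝ} :
    CompODESystemOn χ κ a₀m a₀p a₁m a₁p a₂m a₂p t₀ ub lb ↔ ∀ t ∈ Ici t₀,
      HasDerivWithinAt ub (LotkaVolterra.rhs (compSelfCoeff χ κ a₁m a₂m) (compCrossCoeff χ κ a₂m)
        a₀p t (ub t) (lb t)) (Ici t₀) t ∧
      HasDerivWithinAt lb (LotkaVolterra.rhs (compSelfCoeff χ κ a₁p a₂p) (compCrossCoeff χ κ a₂p)
        a₀m t (lb t) (ub t)) (Ici t₀) t := by
  have key : ∀ (a₀ a₁ a₂ : ℝ → ℝ) t u v, max χ 0 * u * (u - v) +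
      u * (a₀ t - a₁ t * u - κ * max (a₂ t) 0 * v + κ * max (-(a₂ t)) 0 * u) =
      LotkaVolterra.rhs (compSelfCoeff χ κ a₁ a₂) (compCrossCoeff χ κ a₂) a₀ t u v := by
    intros; simp only [LotkaVolterra.rhs, compSelfCoeff, compCrossCoeff]; ring
  simp only [CompODESystemOn, key]

theorem ContBdd.compSelfCoeff (h₁ : ContBdd a₁) (h₂ : ContBdd a₂) :
    ContBdd (compSelfCoeff χ κ a₁ a₂) :=
  ((ContBdd.const _).sub h₁).add ((ContBdd.const κ).mul (h₂.neg.max (ContBdd.const 0)))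

theorem ContBdd.compCrossCoeff (h₂ : ContBdd a₂) : ContBdd (compCrossCoeff χ κ a₂) :=
  ((ContBdd.const _).add ((ContBdd.const κ).mul (h₂.max (ContBdd.const 0)))).neg

theorem compCrossCoeff_nonpos (hκ : 0 ≤ κ) : compCrossCoeff χ κ a₂ t ≤ 0 :=
  neg_nonpos.2 (by positivity)

theorem compSelfCoeff_add_compCrossCoeff :
    compSelfCoeff χ κ a₁ a₂ t + compCrossCoeff χ κ a₂ t = -(a₁ t + κ * a₂ t) := by
  simp only [compSelfCoeff, compCrossCoeff]
  linear_combination (-κ) * max_zero_sub_max_neg_zero_eq_self (a₂ t)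

theorem compSelfCoeff_add_compCrossCoeff_le (hκ : 0 ≤ κ) (h₁ : a₁ t ≤ a₁' t)
    (h₂ : a₂ t ≤ a₂' t) :
    compSelfCoeff χ κ a₁' a₂' t + compCrossCoeff χ κ a₂' t ≤
      compSelfCoeff χ κ a₁ a₂ t + compCrossCoeff χ κ a₂ t := by
  rw [compSelfCoeff_add_compCrossCoeff, compSelfCoeff_add_compCrossCoeff]
  linarith [mul_le_mul_of_nonneg_left h₂ hκ]

theorem compSelfCoeff_le_neg_iInf (h₁ : ContBdd a₁) (h₂ : ContBdd a₂) (ht : t ∈ Ici t₀) :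
    compSelfCoeff χ κ a₁ a₂ t ≤ -⨅ s : Ici t₀, (a₁ s - κ * max (-(a₂ s)) 0 - max χ 0) := by
  have hg := (h₁.sub ((ContBdd.const κ).mul (h₂.neg.max (ContBdd.const 0)))).sub
    (ContBdd.const (max χ 0))
  have := ciInf_le (hg.bddBelow_range_restrict (Ici t₀)) ⟨t, ht⟩
  simp only [compSelfCoeff]
  linarith

theorem iInf_sub_pos (h₁ : ContBdd a₁) (h₂ : ContBdd a₂)
    (hcond : max χ 0 < ⨅ t : Ici t₀, (a₁ t - κ * max (-(a₂ t)) 0)) :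
    0 < ⨅ s : Ici t₀, (a₁ s - κ * max (-(a₂ s)) 0 - max χ 0) := by
  have hg := h₁.sub ((ContBdd.const κ).mul (h₂.neg.max (ContBdd.const 0)))
  exact (sub_pos.2 hcond).trans_le <|
    le_ciInf fun s => sub_le_sub_right (ciInf_le (hg.bddBelow_range_restrict _) s) _

end CompSystem

theorem mul_max_div_add_nonpos {α γ J S u : ℝ} (hJ : 0 < J) (hα : α ≤ -J) (hγ : γ ≤ S)
    (hu : 0 ≤ u) : α * max u (S / J) + γ ≤ 0 := by
  have hM : 0 ≤ max u (S / J) := hu.trans (le_max_left _ _)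
  have hSJ := (div_le_iff₀ hJ).1 (le_max_right u (S / J))
  nlinarith [mul_le_mul_of_nonneg_right hα hM]

theorem comparison_system_global_existence_and_order_general
    (χ κ : ℝ) (hκ : 0 < κ)
    (a₀m a₀p a₁m a₁p a₂m a₂p : ℝ → ℝ)
    (h₀ : ContBdd a₀m) (h₀' : ContBdd a₀p) (h₁ : ContBdd a₁m) (h₁' : ContBdd a₁p)
    (h₂ : ContBdd a₂m) (h₂' : ContBdd a₂p)
    (hle₀ : ∀ t, a₀m t ≤ a₀p t) (hle₁ : ∀ t, a₁m t ≤ a₁p t) (hle₂ : ∀ t, a₂m t ≤ a₂p t)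
    (t₀ : ℝ)
    (hcond : max χ 0 < ⨅ t : Set.Ici t₀, (a₁m ↑t - κ * max (-(a₂m ↑t)) 0))
    (ub₀ lb₀ : ℝ) (hlb₀ : 0 ≤ lb₀) (hord₀ : lb₀ ≤ ub₀) :
    (∃ ub lb : ℝ → ℝ, ub t₀ = ub₀ ∧ lb t₀ = lb₀ ∧
      CompODESystemOn χ κ a₀m a₀p a₁m a₁p a₂m a₂p t₀ ub lb) ∧
    (∀ ub lb : ℝ → ℝ, ub t₀ = ub₀ → lb t₀ = lb₀ →
      CompODESystemOn χ κ a₀m a₀p a₁m a₁p a₂m a₂p t₀ ub lb →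
      ∀ t ∈ Set.Ici t₀,
        0 ≤ lb t ∧ lb t ≤ ub t ∧
        ub t ≤ max ub₀
          ((⨆ s, a₀p s) /
            (⨅ s : Set.Ici t₀, (a₁m ↑s - κ * max (-(a₂m ↑s)) 0 - max χ 0)))) := by
  set J := ⨅ s : Ici t₀, (a₁m ↑s - κ * max (-(a₂m ↑s)) 0 - max χ 0)
  set M := max ub₀ ((⨆ s, a₀p s) / J)
  have hJ : 0 < J := iInf_sub_pos h₁ h₂ hcond
  have hα₁J : ∀ t ∈ Ici t₀, compSelfCoeff χ κ a₁m a₂m t ≤ -J := fun t ht =>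
    compSelfCoeff_le_neg_iInf h₁ h₂ ht
  have hα₁ : ∀ t ∈ Ici t₀, compSelfCoeff χ κ a₁m a₂m t ≤ 0 := fun t ht =>
    (hα₁J t ht).trans (by linarith)
  have hM : ∀ t ∈ Ici t₀, compSelfCoeff χ κ a₁m a₂m t * M + a₀p t ≤ 0 := fun t ht =>
    mul_max_div_add_nonpos hJ (hα₁J t ht) (le_ciSup h₀'.2.1 t) (hlb₀.trans hord₀)
  have hαβ := fun t (_ : t ∈ Ici t₀) =>
    compSelfCoeff_add_compCrossCoeff_le (χ := χ) hκ.le (hle₁ t) (hle₂ t)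
  have hβ : ∀ t ∈ Ici t₀, compCrossCoeff χ κ a₂m t ≤ 0 := fun _ _ => compCrossCoeff_nonpos hκ.le
  refine ⟨?_, fun ub lb hub hlb hsys => ?_⟩
  · obtain ⟨x, y, hx, hy, hsol⟩ := LotkaVolterra.exists_solution (h₁.compSelfCoeff h₂)
      h₂.compCrossCoeff h₀' (h₁'.compSelfCoeff h₂') h₂'.compCrossCoeff h₀ (fun t _ => hle₀ t)
      hαβ hα₁ hβ hM hlb₀ hord₀ (le_max_left _ _)
    exact ⟨x, y, hx, hy, compODESystemOn_iff.2 hsol⟩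
  · have hsys := compODESystemOn_iff.1 hsys
    exact LotkaVolterra.zero_le_snd_le_fst_le monotone_id LipschitzWith.id rfl (fun _ h => h)
      (h₁.compSelfCoeff h₂).1.continuousOn h₂.compCrossCoeff.1.continuousOn h₀'.1.continuousOn
      (h₁'.compSelfCoeff h₂').1.continuousOn h₂'.compCrossCoeff.1.continuousOn h₀.1.continuousOn
      (fun t _ => hle₀ t) hαβ hα₁ hβ hM (fun t ht => (hsys t ht).1) (fun t ht => (hsys t ht).2)
      (hlb ▸ hlb₀) (hub ▸ hlb ▸ hord₀) (hub ▸ le_max_left _ _)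

/-- if `inf_{t ≥ t₀} {a₁⁻(t) − κ(a₂⁻(t))₋} > (χ)₊`, then for any initial data
`0 ≤ u̲₀ ≤ ū₀` the solution of the comparison ODE system exists on `[t₀, ∞)` and satisfies
`0 ≤ u̲(t) ≤ ū(t)` together with the explicit upper bound for `ū`. -/
theorem comparison_system_global_existence_and_order
    (χ κ : ℝ) (hκ : 0 < κ)
    (a₀m a₀p a₁m a₁p a₂m a₂p : ℝ → ℝ)
    (h₀ : ContBdd a₀m) (h₀' : ContBdd a₀p) (h₁ : ContBdd a₁m) (h₁' : ContBdd a₁p)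
    (h₂ : ContBdd a₂m) (h₂' : ContBdd a₂p)
    (hle₀ : ∀ t, a₀m t ≤ a₀p t) (hle₁ : ∀ t, a₁m t ≤ a₁p t) (hle₂ : ∀ t, a₂m t ≤ a₂p t)
    (h₀pos : 0 < ⨅ t, a₀m t) (h₁nonneg : ∀ t, 0 ≤ a₁m t)
    (t₀ : ℝ)
    (hcond : max χ 0 < ⨅ t : Set.Ici t₀, (a₁m ↑t - κ * max (-(a₂m ↑t)) 0))
    (ub₀ lb₀ : ℝ) (hlb₀ : 0 ≤ lb₀) (hord₀ : lb₀ ≤ ub₀) :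
    (∃ ub lb : ℝ → ℝ, ub t₀ = ub₀ ∧ lb t₀ = lb₀ ∧
      CompODESystemOn χ κ a₀m a₀p a₁m a₁p a₂m a₂p t₀ ub lb) ∧
    (∀ ub lb : ℝ → ℝ, ub t₀ = ub₀ → lb t₀ = lb₀ →
      CompODESystemOn χ κ a₀m a₀p a₁m a₁p a₂m a₂p t₀ ub lb →
      ∀ t ∈ Set.Ici t₀,
        0 ≤ lb t ∧ lb t ≤ ub t ∧
        ub t ≤ max ub₀
          ((⨆ s, a₀p s) /
            (⨅ s : Set.Ici t₀, (a₁m ↑s - κ * max (-(a₂m ↑s)) 0 - max χ 0)))) :=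
  comparison_system_global_existence_and_order_general χ κ hκ a₀m a₀p a₁m a₁p a₂m a₂p h₀ h₀' h₁ h₁'
    h₂ h₂' hle₀ hle₁ hle₂ t₀ hcond ub₀ lb₀ hlb₀ hord₀
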